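/- arXiv:1605.09541 — 3 statements merged into one kernel-verified Lean document; each statement's English description precedes it below -/
import Mathlib

section
/- For every even positive integer m, Σ_{n=1}^{∞} (ζ(2n)/(n·4^n)) · C(2n, m) = (1/m) · (2ζ(m)(1 − 1/2^m) − 1), where C(2n, m) denotes the binomial coefficient. -/
/-!
Writing `ζ(2n) = ∑ₖ k⁻²ⁿ` and exchanging the two summations (all terms are nonnegative), the
inner sum at `x = 1/(2k)` is `∑ₙ C(2n, m) x²ⁿ / n`, the even part of `2 ∑ⱼ C(j, m) xʲ / j`.
Since `C(j, m) / j = C(j - 1, m - 1) / m`, the latter is the negative binomial series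
`(2/m) (x / (1 - x))ᵐ`, so for even `m` the inner sum is `((2k - 1)⁻ᵐ + (2k + 1)⁻ᵐ) / m`.
Summing over `k ≥ 1` counts every odd reciprocal power twice except `1`, which gives
`2 (1 - 2⁻ᵐ) ζ(m) - 1`.
-/

open Real

/-- Real Riemann zeta values via the series `∑ 1/k^m`. -/
noncomputable def zetaR (m : ℕ) : ℝ := ∑' k : ℕ, 1 / ((k : ℝ) + 1) ^ m

theorem HasSum.swap_of_nonneg {β γ : Type*} {f : β → γ → ℝ} (hf : ∀ b c, 0 ≤ f b c)
    {g : β → ℝ} {h : γ → ℝ} {a : ℝ} (hg : ∀ b, HasSum (f b) (g b)) (ha : HasSum g a)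
    (hh : ∀ c, HasSum (fun b ↦ f b c) (h c)) : HasSum h a := by
  have hF : Summable (Function.uncurry f) :=
    (summable_prod_of_nonneg fun p ↦ hf p.1 p.2).mpr
      ⟨fun b ↦ (hg b).summable, by simpa only [(hg _).tsum_eq] using ha.summable⟩
  have hfa : HasSum (Function.uncurry f) a :=
    (hF.hasSum.prod_fiberwise hg).unique ha ▸ hF.hasSum
  exact ((Equiv.prodComm γ β).hasSum_iff.mpr hfa).prod_fiberwise hh

section

variable {𝕜 : Type*} [RCLike 𝕜]

theorem hasSum_choose_div_mul_pow {m : ℕ} (hm : 0 < m) {x : 𝕜} (hx : ‖x‖ < 1) :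
    HasSum (fun j : ℕ ↦ (j.choose m : 𝕜) / j * x ^ j) ((x / (1 - x)) ^ m / m) := by
  obtain ⟨r, rfl⟩ : ∃ r, m = r + 1 := ⟨m - 1, by omega⟩
  rw [← hasSum_nat_add_iff' (r + 1)]
  have hlow : ∑ i ∈ Finset.range (r + 1), (i.choose (r + 1) : 𝕜) / i * x ^ i = 0 :=
    Finset.sum_eq_zero fun i hi ↦ by
      rw [Nat.choose_eq_zero_of_lt (Finset.mem_range.mp hi)]
      simp
  have hr : ((r : 𝕜) + 1) ≠ 0 := by exact_mod_cast r.succ_ne_zero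
  have h1x : 1 - x ≠ 0 := fun h ↦ by
    rw [← sub_eq_zero.mp h, norm_one] at hx; exact lt_irrefl _ hx
  rw [hlow, sub_zero, show (x / (1 - x)) ^ (r + 1) / ↑(r + 1) =
    1 / (1 - x) ^ (r + 1) * (x ^ (r + 1) / (r + 1)) by push_cast; rw [div_pow]; field_simp]
  refine ((hasSum_choose_mul_geometric_of_norm_lt_one r hx).mul_right _).congr_fun fun n ↦ ?_
  have hcoef : ((n + (r + 1)).choose (r + 1) : 𝕜) / (n + (r + 1) : ℕ) =
      (n + r).choose r / (r + 1) := by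
    rw [div_eq_div_iff (Nat.cast_ne_zero.mpr (by omega)) hr]
    exact_mod_cast (Nat.add_one_mul_choose_eq (n + r) r).symm.trans (mul_comm _ _)
  rw [pow_add, hcoef]
  ring

theorem hasSum_even_of_hasSum_pow_neg {c : ℕ → 𝕜} {x a b : 𝕜}
    (ha : HasSum (fun j ↦ c j * x ^ j) a) (hb : HasSum (fun j ↦ c j * (-x) ^ j) b) :
    HasSum (fun n ↦ c (2 * n) * x ^ (2 * n)) ((a + b) / 2) := by
  have hodd : ∀ j ∉ Set.range (2 * ·), (c j * x ^ j + c j * (-x) ^ j) / 2 = 0 := by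
    intro j hj
    obtain ⟨n, rfl⟩ : Odd j :=
      Nat.not_even_iff_odd.mp fun ⟨n, hn⟩ ↦ hj ⟨n, by dsimp only; omega⟩
    rw [Odd.neg_pow ⟨n, rfl⟩]; ring
  refine (((mul_right_injective₀ two_ne_zero).hasSum_iff hodd).mpr
    ((ha.add hb).div_const 2)).congr_fun fun n ↦ ?_
  simp only [Function.comp_apply, (even_two_mul n).neg_pow]
  ring

theorem hasSum_choose_div_mul_pow_even {m : ℕ} (hm : Even m) (hm0 : 0 < m) {x : 𝕜}
    (hx : ‖x‖ < 1) :
    HasSum (fun n : ℕ ↦ ((2 * (n + 1)).choose m : 𝕜) / (n + 1) * x ^ (2 * (n + 1)))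
      (((x / (1 - x)) ^ m + (x / (1 + x)) ^ m) / m) := by
  have h := (hasSum_even_of_hasSum_pow_neg (hasSum_choose_div_mul_pow hm0 hx)
    (hasSum_choose_div_mul_pow hm0 (x := -x) (by rwa [norm_neg]))).mul_left 2
  rw [← hasSum_nat_add_iff' 1] at h
  have hval : 2 * (((x / (1 - x)) ^ m / m + (-x / (1 - -x)) ^ m / m) / 2) -
      ∑ i ∈ Finset.range 1, 2 * (((2 * i).choose m : 𝕜) / (2 * i : ℕ) * x ^ (2 * i)) =
      ((x / (1 - x)) ^ m + (x / (1 + x)) ^ m) / m := by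
    simp [hm.neg_pow, neg_div]
    ring
  rw [hval] at h
  refine h.congr_fun fun n ↦ ?_
  push_cast
  field_simp

end

theorem hasSum_zetaR {m : ℕ} (hm : 1 < m) :
    HasSum (fun k : ℕ ↦ 1 / ((k : ℝ) + 1) ^ m) (zetaR m) :=
  (((summable_nat_add_iff 1).mpr (Real.summable_one_div_nat_pow.mpr hm)).congr
    fun k ↦ by push_cast; rfl).hasSum

theorem hasSum_one_div_odd_pow {m : ℕ} (hm : 1 < m) :
    HasSum (fun k : ℕ ↦ 1 / (2 * (k : ℝ) + 1) ^ m) ((1 - 1 / 2 ^ m) * zetaR m) := by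
  set f : ℕ → ℝ := fun k ↦ 1 / ((k : ℝ) + 1) ^ m
  have hf : HasSum f (zetaR m) := hasSum_zetaR hm
  have hodd : HasSum (fun k ↦ f (2 * k + 1)) (1 / 2 ^ m * zetaR m) :=
    (hf.mul_left _).congr_fun fun k ↦ by
      simp only [f]; push_cast
      rw [show 2 * (k : ℝ) + 1 + 1 = 2 * (k + 1) by ring, mul_pow, one_div_mul_one_div]
  obtain ⟨e, heven⟩ : Summable fun k ↦ f (2 * k) :=
    hf.summable.comp_injective (mul_right_injective₀ two_ne_zero)
  have he : e = (1 - 1 / 2 ^ m) * zetaR m := by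
    linarith [(heven.even_add_odd hodd).unique hf]
  subst he
  refine heven.congr_fun fun k ↦ ?_
  simp only [f]; push_cast; rfl

theorem hasSum_one_div_odd_pow_add_succ {m : ℕ} (hm : 1 < m) :
    HasSum (fun k : ℕ ↦ 1 / (2 * (k : ℝ) + 1) ^ m + 1 / (2 * (k : ℝ) + 3) ^ m)
      (2 * zetaR m * (1 - 1 / 2 ^ m) - 1) := by
  have h := hasSum_one_div_odd_pow hm
  have hshift := (hasSum_nat_add_iff' 1).mpr h
  simp only [Finset.sum_range_one, Nat.cast_zero, mul_zero, zero_add, one_pow, div_one] at hshift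
  convert h.add hshift using 1
  · funext k; push_cast; ring_nf
  · ring

theorem hasSum_choose_div_mul_one_div_two_mul_pow {m : ℕ} (hm : Even m) (hm0 : 0 < m) (k : ℕ) :
    HasSum (fun n : ℕ ↦
        ((2 * (n + 1)).choose m : ℝ) / (n + 1) * (1 / (2 * ((k : ℝ) + 1))) ^ (2 * (n + 1)))
      ((1 / (2 * (k : ℝ) + 1) ^ m + 1 / (2 * (k : ℝ) + 3) ^ m) / m) := by
  set x : ℝ := 1 / (2 * ((k : ℝ) + 1))
  have hx : ‖x‖ < 1 := by
    rw [Real.norm_of_nonneg (by positivity), div_lt_one (by positivity)]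
    linarith [k.cast_nonneg (α := ℝ)]
  have hsub : x / (1 - x) = 1 / (2 * (k : ℝ) + 1) := by
    rw [one_sub_div (by positivity), div_div_div_cancel_right₀ (by positivity)]
    ring
  have hadd : x / (1 + x) = 1 / (2 * (k : ℝ) + 3) := by
    rw [one_add_div (by positivity), div_div_div_cancel_right₀ (by positivity)]
    ring
  simpa only [hsub, hadd, one_div_pow] using hasSum_choose_div_mul_pow_even hm hm0 hx

theorem zeta_binom_four_even (m : ℕ) (hm : Even m) (hm0 : 0 < m) :
    ∑' n : ℕ, zetaR (2 * (n + 1)) / (((n : ℝ) + 1) * 4 ^ (n + 1)) *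
      (Nat.choose (2 * (n + 1)) m : ℝ) =
      (1 / (m : ℝ)) * (2 * zetaR m * (1 - 1 / 2 ^ m) - 1) := by
  have hm1 : 1 < m := by obtain ⟨t, rfl⟩ := hm; omega
  have hrow (n : ℕ) : HasSum (fun k : ℕ ↦
        ((2 * (n + 1)).choose m : ℝ) / (n + 1) * (1 / (2 * ((k : ℝ) + 1))) ^ (2 * (n + 1)))
      (zetaR (2 * (n + 1)) / (((n : ℝ) + 1) * 4 ^ (n + 1)) *
        (Nat.choose (2 * (n + 1)) m : ℝ)) := by
    rw [mul_comm (zetaR _ / _), mul_div_assoc', ← div_mul_eq_mul_div]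
    refine ((hasSum_zetaR (by omega)).mul_left _).congr_fun fun k ↦ ?_
    rw [one_div_pow, mul_pow, pow_mul (2 : ℝ) 2]
    norm_num
    field_simp
  have hcols := (hasSum_one_div_odd_pow_add_succ hm1).div_const m
  have hsum := HasSum.swap_of_nonneg (fun n k ↦ by positivity)
    (hasSum_choose_div_mul_one_div_two_mul_pow hm hm0) hcols hrow
  rw [hsum.tsum_eq, one_div_mul_eq_div]
end

section
/- Σ_{n=1}^{∞} ζ(2n)·n²/4^n = 3π²/32. -/
/-!
Expand `ζ(2n) = ∑ₖ (k+1)^(-2n)` and swap the two sums, which is legitimate because every term is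
nonnegative. For fixed `k` the inner sum is `∑ n² rⁿ = r(1+r)/(1-r)³` with `r = 1/y²`, `y = 2k+2`,
that is `y²(y²+1)/(y²-1)³`. In partial fractions over `y ∓ 1`, the odd powers telescope along the
odd numbers (each contributing `1`), while the squares give `2 ∑ 1/(2k+1)² - 1 = π²/4 - 1`, using
`∑ 1/(2k+1)² = (3/4) ζ(2) = π²/8`.
-/

open Real

open Filter Topology

theorem hasSum_sub_succ_of_antitone {f : ℕ → ℝ} (hf : Antitone f) {l : ℝ}
    (hl : Tendsto f atTop (𝓝 l)) : HasSum (fun n ↦ f n - f (n + 1)) (f 0 - l) := by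
  rw [hasSum_iff_tendsto_nat_of_nonneg fun n ↦ sub_nonneg.2 (hf n.le_succ)]
  simpa only [Finset.sum_range_sub'] using hl.const_sub (f 0)

theorem hasSum_tsum_swap_of_nonneg {α β : Type*} {f : α → β → ℝ} (hf : ∀ a b, 0 ≤ f a b)
    {g : α → ℝ} {s : ℝ} (hrow : ∀ a, HasSum (f a) (g a)) (hg : HasSum g s) :
    HasSum (fun b ↦ ∑' a, f a b) s := by
  have hprod : Summable (Function.uncurry f) :=
    (summable_prod_of_nonneg fun p ↦ hf p.1 p.2).2
      ⟨fun a ↦ (hrow a).summable, by simpa only [(hrow _).tsum_eq] using hg.summable⟩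
  have hcol : Summable fun b ↦ ∑' a, f a b := hprod.prod_symm.prod
  have h := hcol.hasSum
  rwa [hprod.tsum_comm, tsum_congr fun a ↦ (hrow a).tsum_eq, hg.tsum_eq] at h

theorem hasSum_succ_sq_mul_geometric {𝕜 : Type*} [NormedField 𝕜] [HasSummableGeomSeries 𝕜]
    {r : 𝕜} (hr : ‖r‖ < 1) :
    HasSum (fun n : ℕ ↦ ((n : 𝕜) + 1) ^ 2 * r ^ n) ((1 + r) / (1 - r) ^ 3) := by
  have hne : 1 - r ≠ 0 := fun h ↦ by simp [← sub_eq_zero.1 h] at hr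
  have h := ((hasSum_choose_mul_geometric_of_norm_lt_one 2 hr).mul_left 2).sub
    (hasSum_choose_mul_geometric_of_norm_lt_one 1 hr)
  rw [show 2 * (1 / (1 - r) ^ (2 + 1)) - 1 / (1 - r) ^ (1 + 1) = (1 + r) / (1 - r) ^ 3 by
    field_simp; ring] at h
  refine h.congr_fun fun n ↦ ?_
  have hchoose : (((n + 2).choose 2 : ℕ) : 𝕜) * 2 = ((n : 𝕜) + 2) * ((n : 𝕜) + 1) := by
    have h : (n + 2).choose 2 * 2 = (n + 2) * (n + 1) :=
      (Nat.add_one_mul_choose_eq (n + 1) 1).symm.trans (by rw [Nat.choose_one_right])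
    simpa using congrArg (Nat.cast : ℕ → 𝕜) h
  rw [Nat.choose_one_right]
  push_cast
  linear_combination (-(r ^ n)) * hchoose

theorem hasSum_one_div_odd_pow_sub {m : ℕ} (hm : m ≠ 0) :
    HasSum (fun k : ℕ ↦ 1 / (2 * (k : ℝ) + 1) ^ m - 1 / (2 * (k : ℝ) + 3) ^ m) 1 := by
  have hanti : Antitone fun k : ℕ ↦ 1 / (2 * (k : ℝ) + 1) ^ m := fun a b hab ↦ by
    dsimp only
    gcongr
  have htend : Tendsto (fun k : ℕ ↦ 1 / (2 * (k : ℝ) + 1) ^ m) atTop (𝓝 0) := by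
    simp only [one_div]
    refine ((tendsto_pow_atTop hm).comp (tendsto_atTop_add_const_right _ _ ?_)).inv_tendsto_atTop
    exact tendsto_natCast_atTop_atTop.const_mul_atTop two_pos
  have h := hasSum_sub_succ_of_antitone hanti htend
  norm_num only [Nat.cast_add, Nat.cast_one, sub_zero, one_pow, div_one] at h
  exact h.congr_fun fun k ↦ by ring_nf

theorem hasSum_one_div_odd_sq :
    HasSum (fun k : ℕ ↦ 1 / (2 * (k : ℝ) + 1) ^ 2) (π ^ 2 / 8) := by
  have heven : HasSum (fun k : ℕ ↦ 1 / ((2 * k : ℕ) : ℝ) ^ 2) (π ^ 2 / 24) := by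
    have h := hasSum_zeta_two.mul_left (1 / 4)
    rw [show 1 / 4 * (π ^ 2 / 6) = π ^ 2 / 24 by ring] at h
    exact h.congr_fun fun k ↦ by push_cast; ring
  have hodd : Summable fun k : ℕ ↦ 1 / ((2 * k + 1 : ℕ) : ℝ) ^ 2 :=
    hasSum_zeta_two.summable.comp_injective (fun a b h ↦ by simpa using h)
  have hsum : π ^ 2 / 24 + ∑' k : ℕ, 1 / ((2 * k + 1 : ℕ) : ℝ) ^ 2 = π ^ 2 / 6 :=
    (HasSum.even_add_odd (f := fun n : ℕ ↦ 1 / (n : ℝ) ^ 2) heven hodd.hasSum).unique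
      hasSum_zeta_two
  have hval : ∑' k : ℕ, 1 / ((2 * k + 1 : ℕ) : ℝ) ^ 2 = π ^ 2 / 8 := by linarith
  exact (hval ▸ hodd.hasSum).congr_fun fun k ↦ by push_cast; ring

theorem hasSum_succ_sq_mul_inv_sq_pow_succ {y : ℝ} (hy : 1 < y) :
    HasSum (fun n : ℕ ↦ ((n : ℝ) + 1) ^ 2 * (1 / y ^ 2) ^ (n + 1))
      (y ^ 2 * (y ^ 2 + 1) / (y ^ 2 - 1) ^ 3) := by
  have hy2 : 1 < y ^ 2 := one_lt_pow₀ hy two_ne_zero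
  have hr : ‖1 / y ^ 2‖ < 1 := by
    rw [Real.norm_of_nonneg (by positivity)]
    exact (div_lt_one (by positivity)).2 hy2
  have h := (hasSum_succ_sq_mul_geometric hr).mul_left (1 / y ^ 2)
  rw [show 1 / y ^ 2 * ((1 + 1 / y ^ 2) / (1 - 1 / y ^ 2) ^ 3)
      = y ^ 2 * (y ^ 2 + 1) / (y ^ 2 - 1) ^ 3 by
    have : y ^ 2 - 1 ≠ 0 := by linarith
    field_simp] at h
  exact h.congr_fun fun n ↦ by ring

theorem sq_mul_sq_add_one_div_sq_sub_one_pow_three {y : ℝ} (hy₁ : y - 1 ≠ 0) (hy₂ : y + 1 ≠ 0) :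
    y ^ 2 * (y ^ 2 + 1) / (y ^ 2 - 1) ^ 3
      = 1 / 8 * (1 / (y - 1) - 1 / (y + 1)) + 3 / 8 * (1 / (y - 1) ^ 2 + 1 / (y + 1) ^ 2)
        + 1 / 4 * (1 / (y - 1) ^ 3 - 1 / (y + 1) ^ 3) := by
  rw [show y ^ 2 - 1 = (y - 1) * (y + 1) by ring]
  field_simp
  ring

theorem hasSum_sq_mul_sq_add_one_div_sq_sub_one_pow_three_even :
    HasSum (fun k : ℕ ↦ (2 * (k : ℝ) + 2) ^ 2 * ((2 * (k : ℝ) + 2) ^ 2 + 1)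
      / ((2 * (k : ℝ) + 2) ^ 2 - 1) ^ 3) (3 * π ^ 2 / 32) := by
  have hodd_sq_succ : HasSum (fun k : ℕ ↦ 1 / (2 * (k : ℝ) + 3) ^ 2) (π ^ 2 / 8 - 1) := by
    have h := (hasSum_nat_add_iff' 1).2 hasSum_one_div_odd_sq
    rw [Finset.sum_range_one, Nat.cast_zero, mul_zero, zero_add, one_pow, div_one] at h
    exact h.congr_fun fun k ↦ by push_cast; ring
  have h := (((hasSum_one_div_odd_pow_sub one_ne_zero).mul_left (1 / 8)).add
    ((hasSum_one_div_odd_sq.add hodd_sq_succ).mul_left (3 / 8))).add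
    ((hasSum_one_div_odd_pow_sub three_ne_zero).mul_left (1 / 4))
  rw [show 1 / 8 * 1 + 3 / 8 * (π ^ 2 / 8 + (π ^ 2 / 8 - 1)) + 1 / 4 * 1 = 3 * π ^ 2 / 32 by
    ring] at h
  refine h.congr_fun fun k ↦ ?_
  have hk : (0 : ℝ) ≤ k := k.cast_nonneg
  rw [sq_mul_sq_add_one_div_sq_sub_one_pow_three (ne_of_gt (by linarith)) (ne_of_gt (by linarith))]
  ring_nf

theorem zeta_series_four_n_sq :
    ∑' n : ℕ, zetaR (2 * (n + 1)) * ((n : ℝ) + 1) ^ 2 / 4 ^ (n + 1) = 3 * π ^ 2 / 32 := by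
  have hterm : ∀ n : ℕ, zetaR (2 * (n + 1)) * ((n : ℝ) + 1) ^ 2 / 4 ^ (n + 1)
      = ∑' k : ℕ, ((n : ℝ) + 1) ^ 2 * (1 / (2 * (k : ℝ) + 2) ^ 2) ^ (n + 1) := fun n ↦ by
    rw [zetaR, ← tsum_mul_right, ← tsum_div_const]
    refine tsum_congr fun k ↦ ?_
    rw [show (2 * (k : ℝ) + 2) ^ 2 = 4 * ((k : ℝ) + 1) ^ 2 by ring, one_div_pow, mul_pow, ← pow_mul]
    field_simp
  rw [tsum_congr hterm]
  refine (hasSum_tsum_swap_of_nonneg (fun _ _ ↦ by positivity) (fun k ↦ ?_)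
    hasSum_sq_mul_sq_add_one_div_sq_sub_one_pow_three_even).tsum_eq
  exact hasSum_succ_sq_mul_inv_sq_pow_succ (by linarith [(k.cast_nonneg : (0 : ℝ) ≤ k)])
end

section
/- Σ_{n=1}^{∞} ζ(2n)·(2n−1)/16^n = π²/16 − 1/2. -/
/-!
Expanding `ζ(2n) = ∑ₖ k⁻²ⁿ` and exchanging the two nonnegative series, the row of `k ≥ 1` is
`∑ₙ (2n - 1) xⁿ = x (1 + x) / (1 - x)²` at `x = (4k)⁻²`, which equals
`((4k - 1)⁻² + (4k + 1)⁻²) / 2`. Summing over `k` gives half the sum of the odd reciprocal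
squares other than `1`, that is `(π² / 8 - 1) / 2`.
-/

open Real

theorem hasSum_two_mul_succ_sub_one_mul_pow_succ {𝕜 : Type*} [NormedField 𝕜] [CompleteSpace 𝕜]
    {x : 𝕜} (hx : ‖x‖ < 1) :
    HasSum (fun n : ℕ => (2 * ((n : 𝕜) + 1) - 1) * x ^ (n + 1)) (x * (1 + x) / (1 - x) ^ 2) := by
  have hx1 : 1 - x ≠ 0 := sub_ne_zero.2 fun h => by rw [← h, norm_one] at hx; exact hx.false
  have hcoe : HasSum (fun n : ℕ => ((n : 𝕜) + 1) * x ^ (n + 1)) (x / (1 - x) ^ 2) := by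
    have := (hasSum_nat_add_iff' (f := fun n : ℕ => (n : 𝕜) * x ^ n) 1).2
      (hasSum_coe_mul_geometric_of_norm_lt_one hx)
    simpa only [Nat.cast_add, Nat.cast_one, Finset.range_one, Finset.sum_singleton, Nat.cast_zero,
      zero_mul, sub_zero] using this
  have hgeom : HasSum (fun n : ℕ => x ^ (n + 1)) (x * (1 - x)⁻¹) := by
    simpa only [pow_succ'] using (hasSum_geometric_of_norm_lt_one hx).mul_left x
  convert! (hcoe.mul_left 2).sub hgeom using 1
  · funext n; ring
  · field_simp; ring

theorem HasSum.even_add_odd_pairs {E : Type*} [AddCommGroup E] [UniformSpace E]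
    [IsUniformAddGroup E] [CompleteSpace E] [T2Space E] {f : ℕ → E} {a : E} (h : HasSum f a) :
    HasSum (fun k => f (2 * k) + f (2 * k + 1)) a := by
  obtain ⟨b, hb⟩ := h.summable.comp_injective (mul_right_injective₀ two_ne_zero)
  obtain ⟨c, hc⟩ := h.summable.comp_injective fun m n (hmn : 2 * m + 1 = 2 * n + 1) => by omega
  rw [h.unique (hb.even_add_odd hc)]
  exact hb.add hc

theorem tsum_tsum_eq_of_nonneg_of_hasSum {β γ : Type*} {F : β → γ → ℝ} {g : β → ℝ} {a : ℝ}
    (hF : ∀ k n, 0 ≤ F k n) (hrow : ∀ k, HasSum (F k) (g k)) (hg : HasSum g a) :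
    ∑' n, ∑' k, F k n = a := by
  have hsum : Summable (Function.uncurry F) :=
    (summable_prod_of_nonneg fun p => hF p.1 p.2).2
      ⟨fun k => (hrow k).summable, hg.summable.congr fun k => ((hrow k).tsum_eq).symm⟩
  rw [hsum.tsum_comm, ← hg.tsum_eq]
  exact tsum_congr fun k => (hrow k).tsum_eq

theorem hasSum_one_div_two_mul_add_one_sq :
    HasSum (fun k : ℕ => 1 / (2 * (k : ℝ) + 1) ^ 2) (π ^ 2 / 8) := by
  have heven : HasSum (fun k : ℕ => 1 / ((2 * k : ℕ) : ℝ) ^ 2) (π ^ 2 / 24) := by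
    convert! hasSum_zeta_two.mul_left (1 / 4) using 1
    · funext k; push_cast; ring
    · ring
  convert! hasSum_zeta_two.even_add_odd_pairs.sub heven using 1
  · funext k; push_cast; ring
  · ring

theorem hasSum_one_div_four_mul_add_three_sq_add_one_div_four_mul_add_five_sq :
    HasSum (fun k : ℕ => 1 / (4 * (k : ℝ) + 3) ^ 2 + 1 / (4 * (k : ℝ) + 5) ^ 2) (π ^ 2 / 8 - 1) := by
  have h := (hasSum_nat_add_iff' 1).2 hasSum_one_div_two_mul_add_one_sq
  convert! h.even_add_odd_pairs using 1
  · funext k; push_cast; ring_nf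
  · norm_num

theorem zetaR_two_mul_div_pow (n : ℕ) (c : ℝ) :
    zetaR (2 * (n + 1)) * c / 16 ^ (n + 1)
      = ∑' k : ℕ, c * (1 / (16 * ((k : ℝ) + 1) ^ 2)) ^ (n + 1) := by
  rw [zetaR, mul_div_assoc, ← tsum_mul_right]
  refine tsum_congr fun k => ?_
  rw [pow_mul, one_div_pow, mul_pow]
  field_simp

theorem hasSum_two_mul_succ_sub_one_mul_one_div_sixteen_mul_sq_pow (k : ℕ) :
    HasSum (fun n : ℕ => (2 * ((n : ℝ) + 1) - 1) * (1 / (16 * ((k : ℝ) + 1) ^ 2)) ^ (n + 1))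
      ((1 / (4 * (k : ℝ) + 3) ^ 2 + 1 / (4 * (k : ℝ) + 5) ^ 2) / 2) := by
  have hx : ‖1 / (16 * ((k : ℝ) + 1) ^ 2)‖ < 1 := by
    rw [norm_of_nonneg (by positivity), div_lt_one (by positivity)]
    nlinarith [k.cast_nonneg (α := ℝ)]
  convert! hasSum_two_mul_succ_sub_one_mul_pow_succ hx using 1
  have hsub : (1 : ℝ) - 1 / (16 * ((k : ℝ) + 1) ^ 2)
      = (4 * (k : ℝ) + 3) * (4 * (k : ℝ) + 5) / (16 * ((k : ℝ) + 1) ^ 2) := by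
    field_simp; ring
  rw [hsub]
  field_simp
  ring

theorem zeta_series_sixteen_linear :
    ∑' n : ℕ, zetaR (2 * (n + 1)) * (2 * ((n : ℝ) + 1) - 1) / 16 ^ (n + 1) =
      π ^ 2 / 16 - 1 / 2 := by
  have hcol : HasSum (fun k : ℕ => (1 / (4 * (k : ℝ) + 3) ^ 2 + 1 / (4 * (k : ℝ) + 5) ^ 2) / 2)
      (π ^ 2 / 16 - 1 / 2) := by
    convert! hasSum_one_div_four_mul_add_three_sq_add_one_div_four_mul_add_five_sq.div_const 2
      using 1
    ring
  simp_rw [zetaR_two_mul_div_pow]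
  refine tsum_tsum_eq_of_nonneg_of_hasSum (fun k n => ?_)
    hasSum_two_mul_succ_sub_one_mul_one_div_sixteen_mul_sq_pow hcol
  have hcoef : (0 : ℝ) ≤ 2 * ((n : ℝ) + 1) - 1 := by linarith [n.cast_nonneg (α := ℝ)]
  positivity
end
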